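/- arXiv:2602.11080 — 2 statements merged into one kernel-verified Lean document; each statement's English description precedes it below -/
import Mathlib

section
/- For every d×d real orthogonal matrix S there exists a signature matrix Z (a diagonal matrix with each diagonal entry equal to +1 or -1) and a real skew-symmetric matrix A whose entries all lie in the closed interval [-1, 1], such that I + SZ is invertible and SZ = (I - A)(I + A)⁻¹. -/
open Matrix

/-!
Among the `2^d` signature matrices `Z`, choose one maximising `|det (1 + S Z)|`. Since
`det (1 + S Z)` is affine in each diagonal entry of `Z`, these determinants sum to `2^d`, so the
maximum is nonzero and `1 + S Z` is invertible. The Cayley transform `A` of the orthogonal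
matrix `S Z` is then skew-symmetric and `S Z = (1 - A)(1 + A)⁻¹`. Flipping the signs `i ≠ j`
of `Z` multiplies `det (1 + S Z)` by the principal minor `A i i * A j j - A i j * A j i = A i j ^ 2`,
so maximality forces `|A i j| ≤ 1`.
-/

namespace Matrix

variable {n m K : Type*} [Fintype n] [DecidableEq n] [Fintype m] [DecidableEq m]

section Signature

variable [CommRing K]

def signDiag (σ : n → ℤˣ) : Matrix n n K := diagonal fun k => ((σ k : ℤ) : K)

def pairSign (i j : n) : n → ℤˣ := fun k => if k = i ∨ k = j then -1 else 1

theorem signDiag_mul (σ τ : n → ℤˣ) :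
    (signDiag (σ * τ) : Matrix n n K) = signDiag σ * signDiag τ := by
  simp [signDiag, diagonal_mul_diagonal]

theorem transpose_signDiag_mul_self (σ : n → ℤˣ) :
    (signDiag σ : Matrix n n K)ᵀ * signDiag σ = 1 := by
  rw [signDiag, diagonal_transpose, ← signDiag, ← signDiag_mul]
  simp [signDiag, Int.units_mul_self]

theorem sum_det_add_mul_signDiag (M N : Matrix n n K) :
    ∑ σ : n → ℤˣ, det (M + N * signDiag σ) = 2 ^ Fintype.card n * det M := by
  let g : n → ℤˣ → n → K := fun k u => Mᵀ k + ((u : ℤ) : K) • Nᵀ k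
  have hrows (σ : n → ℤˣ) : det (M + N * signDiag σ) = detRowAlternating fun k => g k (σ k) := by
    rw [← det_transpose]
    congr 1
    ext k l
    simp [g, signDiag, mul_comm]
  have hsum (k : n) : ∑ u, g k u = (2 : K) • Mᵀ k := by
    rw [UnitsInt.univ, Finset.sum_pair (by decide)]
    simp only [g, Units.val_one, Units.val_neg, Int.cast_one, Int.cast_neg, one_smul, neg_smul,
      two_smul]
    abel
  calc ∑ σ : n → ℤˣ, det (M + N * signDiag σ)
      = ∑ σ : n → ℤˣ, detRowAlternating.toMultilinearMap fun k => g k (σ k) := by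
        simp_rw [hrows]; rfl
    _ = detRowAlternating fun k => ∑ u, g k u := (MultilinearMap.map_sum _ g).symm
    _ = det ((2 : K) • Mᵀ) := by simp_rw [hsum]; rfl
    _ = 2 ^ Fintype.card n * det M := by rw [det_smul, det_transpose]

end Signature

section Cayley

variable [Field K] {Q : Matrix n n K}

noncomputable def cayley (Q : Matrix n n K) : Matrix n n K := (1 - Q) * (1 + Q)⁻¹

theorem cayley_eq_two_smul_inv_sub_one (hQ : IsUnit (1 + Q)) :
    cayley Q = (2 : K) • (1 + Q)⁻¹ - 1 := by
  have hB := (isUnit_iff_isUnit_det _).mp hQ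
  rw [cayley, show 1 - Q = (2 : K) • 1 - (1 + Q) by module, Matrix.sub_mul, smul_mul_assoc,
    Matrix.one_mul, mul_nonsing_inv _ hB]

theorem one_add_mul_one_sub_cayley (hQ : IsUnit (1 + Q)) :
    (1 + Q) * (1 - cayley Q) = (2 : K) • Q := by
  have hB := (isUnit_iff_isUnit_det _).mp hQ
  rw [cayley_eq_two_smul_inv_sub_one hQ,
    show (1 : Matrix n n K) - ((2 : K) • (1 + Q)⁻¹ - 1) = (2 : K) • (1 - (1 + Q)⁻¹) by module,
    mul_smul_comm, Matrix.mul_sub, Matrix.mul_one, mul_nonsing_inv _ hB, add_sub_cancel_left]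

theorem transpose_cayley (hQ : IsUnit (1 + Q)) (hQQ : Qᵀ * Q = 1) :
    (cayley Q)ᵀ = -cayley Q := by
  have hB := (isUnit_iff_isUnit_det _).mp hQ
  have hinv : (1 + Qᵀ)⁻¹ = 1 - (1 + Q)⁻¹ := by
    refine inv_eq_left_inv ?_
    have hQQt : (1 + Q) * Qᵀ = 1 + Qᵀ := by
      rw [Matrix.add_mul, Matrix.one_mul, mul_eq_one_comm.mp hQQ, add_comm]
    rw [Matrix.sub_mul, Matrix.one_mul, ← hQQt, nonsing_inv_mul_cancel_left (1 + Q) _ hB, hQQt,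
      add_sub_cancel_right]
  rw [cayley_eq_two_smul_inv_sub_one hQ, transpose_sub, transpose_smul, transpose_nonsing_inv,
    transpose_add, transpose_one, hinv]
  module

theorem det_one_add_mul_one_sub_two_smul (hQ : IsUnit (1 + Q)) (E : Matrix m n K)
    (hE : E * Eᵀ = 1) :
    det (1 + Q * (1 - (2 : K) • (Eᵀ * E))) = det (1 + Q) * det (E * cayley Q * Eᵀ) := by
  have hfactor : 1 + Q * (1 - (2 : K) • (Eᵀ * E)) = (1 + Q) * (1 - (1 - cayley Q) * Eᵀ * E) := by
    rw [Matrix.mul_sub, Matrix.mul_one, Matrix.mul_sub, Matrix.mul_one, ← Matrix.mul_assoc,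
      ← Matrix.mul_assoc, one_add_mul_one_sub_cayley hQ]
    simp only [smul_mul_assoc, mul_smul_comm, Matrix.mul_assoc]
    abel
  have hcompress : 1 - E * ((1 - cayley Q) * Eᵀ) = E * cayley Q * Eᵀ := by
    rw [← Matrix.mul_assoc, Matrix.mul_sub, Matrix.mul_one, Matrix.sub_mul, hE, sub_sub_cancel]
  rw [hfactor, det_mul, det_one_sub_mul_comm ((1 - cayley Q) * Eᵀ), hcompress]

theorem det_one_add_mul_signDiag_pairSign (hQ : IsUnit (1 + Q)) {i j : n} (hij : i ≠ j) :
    det (1 + Q * signDiag (pairSign i j))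
      = det (1 + Q) * (cayley Q i i * cayley Q j j - cayley Q i j * cayley Q j i) := by
  set f : Fin 2 → n := ![i, j]
  set E : Matrix (Fin 2) n K := (1 : Matrix n n K).submatrix f id
  have hconj (M : Matrix n n K) : E * M * Eᵀ = M.submatrix f f := by
    rw [← Matrix.one_mul M, ← Matrix.mul_one (1 * M), submatrix_mul _ _ _ id _ Function.bijective_id,
      submatrix_mul _ _ _ id _ Function.bijective_id, submatrix_id_id, transpose_submatrix,
      transpose_one, Matrix.mul_one, Matrix.one_mul]
  have hE : E * Eᵀ = 1 := by
    have h1 := hconj 1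
    rw [Matrix.mul_one] at h1
    rw [h1, submatrix_one f]
    simp [f, Function.Injective, Fin.forall_fin_two, hij, hij.symm]
  have hflip : signDiag (pairSign i j) = 1 - (2 : K) • (Eᵀ * E) := by
    ext k l
    rw [sub_apply, smul_apply, mul_apply, Fin.sum_univ_two]
    simp only [signDiag, pairSign, transpose_apply, E, submatrix_apply, id, f, cons_val_zero,
      cons_val_one, one_apply, diagonal_apply, apply_ite Units.val, apply_ite Int.cast,
      Units.val_neg, Units.val_one, Int.cast_neg, Int.cast_one]
    by_cases hkl : k = l <;> by_cases hi : k = i <;> by_cases hj : k = j <;>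
      simp_all [eq_comm] <;> norm_num
  rw [hflip, det_one_add_mul_one_sub_two_smul hQ E hE, hconj, det_fin_two]
  rfl

variable [NeZero (2 : K)]

theorem one_add_cayley_mul (hQ : IsUnit (1 + Q)) :
    (1 + cayley Q) * ((2⁻¹ : K) • (1 + Q)) = 1 := by
  have hB := (isUnit_iff_isUnit_det _).mp hQ
  rw [cayley_eq_two_smul_inv_sub_one hQ, add_sub_cancel, smul_mul_smul_comm,
    mul_inv_cancel₀ two_ne_zero, one_smul, nonsing_inv_mul _ hB]

theorem cayley_cayley (hQ : IsUnit (1 + Q)) : cayley (cayley Q) = Q := by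
  have hB := (isUnit_iff_isUnit_det _).mp hQ
  rw [cayley, inv_eq_right_inv (one_add_cayley_mul hQ), cayley_eq_two_smul_inv_sub_one hQ,
    show (1 : Matrix n n K) - ((2 : K) • (1 + Q)⁻¹ - 1) = (2 : K) • (1 - (1 + Q)⁻¹) by module,
    smul_mul_smul_comm, mul_inv_cancel₀ two_ne_zero, one_smul, Matrix.sub_mul, Matrix.one_mul,
    nonsing_inv_mul _ hB, add_sub_cancel_left]

end Cayley

section Ordered

variable [Field K] [LinearOrder K] [IsStrictOrderedRing K]

theorem isUnit_one_add_mul_signDiag_of_forall_abs_det_le {N : Matrix n n K} {σ : n → ℤˣ}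
    (hσ : ∀ τ, |det (1 + N * signDiag τ)| ≤ |det (1 + N * signDiag σ)|) :
    IsUnit (1 + N * signDiag σ) := by
  rw [isUnit_iff_isUnit_det, isUnit_iff_ne_zero]
  intro h0
  have hall (τ : n → ℤˣ) : det (1 + N * signDiag τ) = 0 :=
    abs_nonpos_iff.mp (by simpa [h0] using hσ τ)
  have hsum := sum_det_add_mul_signDiag (1 : Matrix n n K) N
  simp only [hall, Finset.sum_const_zero, det_one, mul_one] at hsum
  exact (pow_pos two_pos _).ne hsum

theorem abs_cayley_apply_le_one {Q : Matrix n n K} (hQ : IsUnit (1 + Q))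
    (hskew : (cayley Q)ᵀ = -cayley Q)
    (hmax : ∀ i j, i ≠ j → |det (1 + Q * signDiag (pairSign i j))| ≤ |det (1 + Q)|)
    (i j : n) : |cayley Q i j| ≤ 1 := by
  have hentry (k l : n) : cayley Q l k = -cayley Q k l := congrFun (congrFun hskew k) l
  have hdiag (k : n) : cayley Q k k = 0 := by linarith [hentry k k]
  rcases eq_or_ne i j with rfl | hij
  · simp [hdiag]
  have hpos : 0 < |det (1 + Q)| :=
    abs_pos.mpr ((isUnit_iff_isUnit_det _).mp hQ).ne_zero
  have hle := hmax i j hij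
  rw [det_one_add_mul_signDiag_pairSign hQ hij, hdiag, hdiag, hentry i j,
    show (0 : K) * 0 - cayley Q i j * -cayley Q i j = cayley Q i j ^ 2 by ring, abs_mul,
    abs_of_nonneg (sq_nonneg (cayley Q i j))] at hle
  exact (sq_le_one_iff_abs_le_one _).mp ((mul_le_iff_le_one_right hpos).mp hle)

end Ordered

end Matrix

/-- For every real orthogonal matrix `S`, there exist a signature matrix `Z` (diagonal with
`±1` diagonal entries) and a real skew-symmetric matrix `A` whose entries lie in `[-1, 1]`
such that `I + SZ` is invertible and `SZ = (I - A)(I + A)⁻¹`. -/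
theorem cayley_repr_with_signature {d : ℕ} (S : Matrix (Fin d) (Fin d) ℝ)
    (hS : Sᵀ * S = 1) :
    ∃ Z A : Matrix (Fin d) (Fin d) ℝ,
      (∀ i, Z i i = 1 ∨ Z i i = -1) ∧ (∀ i j, i ≠ j → Z i j = 0) ∧
      Aᵀ = -A ∧ (∀ i j, A i j ∈ Set.Icc (-1 : ℝ) 1) ∧
      IsUnit (1 + S * Z) ∧ S * Z = (1 - A) * (1 + A)⁻¹ := by
  obtain ⟨σ, hσ⟩ := Finite.exists_max fun σ : Fin d → ℤˣ => |det (1 + S * signDiag σ)|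
  set Q := S * signDiag σ
  have hQ : IsUnit (1 + Q) := isUnit_one_add_mul_signDiag_of_forall_abs_det_le hσ
  have hQQ : Qᵀ * Q = 1 := by
    rw [transpose_mul, Matrix.mul_assoc, ← Matrix.mul_assoc Sᵀ, hS, Matrix.one_mul,
      transpose_signDiag_mul_self]
  have hskew := transpose_cayley hQ hQQ
  have hpair (i j : Fin d) (_ : i ≠ j) :
      |det (1 + Q * signDiag (pairSign i j))| ≤ |det (1 + Q)| := by
    have hflip := hσ (σ * pairSign i j)
    rwa [signDiag_mul, ← Matrix.mul_assoc] at hflip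
  refine ⟨signDiag σ, cayley Q, fun i => ?_, fun i j hij => diagonal_apply_ne _ hij, hskew,
    fun i j => abs_le.mp (abs_cayley_apply_le_one hQ hskew hpair i j), hQ, (cayley_cayley hQ).symm⟩
  rcases Int.units_eq_one_or (σ i) with h | h <;> simp [signDiag, h]
end

section
/- Let A be a d×d real skew-symmetric matrix, Λ a d×d invertible real diagonal matrix, μ, y ∈ ℝᵈ, and set u = Λ⁻¹ (I + A)(I - A)⁻¹ (y - μ). Fix indices i ≠ j and let E = J^{i,j} - J^{j,i}, where J^{i,j} is the matrix with a 1 in position (i,j) and zeros elsewhere. Then the directional derivative at A in the direction E of the map X ↦ μ + (I - X)(I + X)⁻¹ Λ u equals -2 (I + A)⁻¹ (J^{i,j} - J^{j,i}) (I - A)⁻¹ (y - μ). -/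
/-!
The map `t ↦ (1 - X t)(1 + X t)⁻¹` along the line `X t = A + t • E` is differentiated by
the product rule together with the derivative `-(1 + A)⁻¹ E (1 + A)⁻¹` of matrix inversion;
since `(1 + A) + (1 - A) = 2` the two terms combine to `-2 (1 + A)⁻¹ E (1 + A)⁻¹`. Applied to
`Λ u`, the factor `(1 + A)⁻¹ Λ Λ⁻¹ (1 + A)` cancels. Invertibility of `1 + A` comes from
skew-symmetry: `(1 + A) v = 0` gives `v ⬝ᵥ v = -(v ⬝ᵥ A v) = 0`.
-/

open Matrix

-- Any norm would do: all norms on matrices induce the product topology, so derivatives agree.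
attribute [local instance] Matrix.linftyOpNormedRing Matrix.linftyOpNormedAlgebra

section Skew

variable {n R : Type*} [Fintype n] [Field R] [LinearOrder R] [IsStrictOrderedRing R]

theorem dotProduct_mulVec_self_eq_zero_of_transpose_eq_neg {A : Matrix n n R} (hA : Aᵀ = -A)
    (v : n → R) : v ⬝ᵥ A *ᵥ v = 0 := by
  have h : v ⬝ᵥ A *ᵥ v = -(v ⬝ᵥ A *ᵥ v) := by
    conv_lhs => rw [dotProduct_mulVec, ← mulVec_transpose, hA, neg_mulVec, dotProduct_comm]
    rw [dotProduct_neg]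
  linarith

theorem isUnit_one_add_of_transpose_eq_neg [DecidableEq n] {A : Matrix n n R} (hA : Aᵀ = -A) :
    IsUnit (1 + A) := by
  rw [isUnit_iff_isUnit_det, isUnit_iff_ne_zero, Ne, ← exists_mulVec_eq_zero_iff]
  rintro ⟨v, hv0, hv⟩
  have hvv : v ⬝ᵥ v = v ⬝ᵥ (1 + A) *ᵥ v := by
    rw [add_mulVec, one_mulVec, dotProduct_add,
      dotProduct_mulVec_self_eq_zero_of_transpose_eq_neg hA, add_zero]
  rw [hv, dotProduct_zero, dotProduct_self_eq_zero] at hvv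
  exact hv0 hvv

end Skew

section Deriv

variable {n 𝕜 : Type*} [Fintype n] [DecidableEq n] [RCLike 𝕜]

theorem HasDerivAt.mulVec_const {M : 𝕜 → Matrix n n 𝕜} {M' : Matrix n n 𝕜} {t : 𝕜}
    (hM : HasDerivAt M M' t) (v : n → 𝕜) : HasDerivAt (fun t => M t *ᵥ v) (M' *ᵥ v) t := by
  exact ((mulVecBilin 𝕜 𝕜).flip v).toContinuousLinearMap.hasFDerivAt.comp_hasDerivAt t hM

theorem hasDerivAt_inv_add_smul {B : Matrix n n 𝕜} (hB : IsUnit B) (E : Matrix n n 𝕜) :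
    HasDerivAt (fun t : 𝕜 => (B + t • E)⁻¹) (-(B⁻¹ * E * B⁻¹)) 0 := by
  have hline : HasDerivAt (fun t : 𝕜 => B + t • E) E 0 := by
    have := ((hasDerivAt_id (0 : 𝕜)).smul_const E).const_add B
    rwa [one_smul] at this
  have := (hasFDerivAt_ringInverse (𝕜 := 𝕜) hB.unit).comp_hasDerivAt_of_eq 0 hline
    (by rw [zero_smul, add_zero, hB.unit_spec])
  simp only [funext fun t => nonsing_inv_eq_ringInverse (B + t • E)]
  rw [_root_.neg_apply, ContinuousLinearMap.mulLeftRight_apply, coe_units_inv,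
    hB.unit_spec] at this
  exact this

theorem hasDerivAt_one_sub_mul_one_add_inv {A : Matrix n n 𝕜} (hA : IsUnit (1 + A))
    (E : Matrix n n 𝕜) :
    HasDerivAt (fun t : 𝕜 => (1 - (A + t • E)) * (1 + A + t • E)⁻¹)
      ((-2 : 𝕜) • ((1 + A)⁻¹ * E * (1 + A)⁻¹)) 0 := by
  have hnum : HasDerivAt (fun t : 𝕜 => 1 - (A + t • E)) (-E) 0 := by
    have := (((hasDerivAt_id (0 : 𝕜)).smul_const E).const_add A).const_sub 1
    rwa [one_smul] at this
  have hinv : (1 + A) * (1 + A)⁻¹ = 1 := mul_nonsing_inv _ ((isUnit_iff_isUnit_det _).mp hA)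
  have hfactor : E * (1 + A)⁻¹ = (1 + A) * ((1 + A)⁻¹ * E * (1 + A)⁻¹) := by
    rw [← mul_assoc, ← mul_assoc, hinv, one_mul]
  have hval : -E * (1 + A)⁻¹ + (1 - A) * -((1 + A)⁻¹ * E * (1 + A)⁻¹)
      = (-2 : 𝕜) • ((1 + A)⁻¹ * E * (1 + A)⁻¹) := by
    rw [neg_mul, hfactor, mul_neg, ← neg_add, ← add_mul, add_add_sub_cancel, add_mul, one_mul]
    module
  have h := hnum.mul (hasDerivAt_inv_add_smul hA E)
  simp only [zero_smul, add_zero] at h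
  rwa [hval] at h

end Deriv

theorem dga_deriv_skew_param_general {d : ℕ} (A Λ : Matrix (Fin d) (Fin d) ℝ)
    (μ y : Fin d → ℝ)
    (hA : Aᵀ = -A) (hΛ : IsUnit Λ)
    (E : Matrix (Fin d) (Fin d) ℝ)
    (u : Fin d → ℝ)
    (hu : u = (Λ⁻¹ * ((1 + A) * (1 - A)⁻¹)).mulVec (y - μ)) :
    HasDerivAt (fun t : ℝ => μ + ((1 - (A + t • E)) * (1 + A + t • E)⁻¹ * Λ).mulVec u)
      (((-2 : ℝ) • ((1 + A)⁻¹ * E * (1 - A)⁻¹)).mulVec (y - μ)) 0 := by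
  have hA1 : IsUnit (1 + A) := isUnit_one_add_of_transpose_eq_neg hA
  have h :=
    (((hasDerivAt_one_sub_mul_one_add_inv hA1 E).mul_const Λ).mulVec_const u).const_add μ
  have hval : (-2 : ℝ) • ((1 + A)⁻¹ * E * (1 + A)⁻¹) * Λ * (Λ⁻¹ * ((1 + A) * (1 - A)⁻¹))
      = (-2 : ℝ) • ((1 + A)⁻¹ * E * (1 - A)⁻¹) := by
    simp only [smul_mul_assoc, mul_assoc]
    rw [mul_nonsing_inv_cancel_left _ _ ((isUnit_iff_isUnit_det _).mp hΛ),
      nonsing_inv_mul_cancel_left _ _ ((isUnit_iff_isUnit_det _).mp hA1)]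
  have hderiv : ((-2 : ℝ) • ((1 + A)⁻¹ * E * (1 - A)⁻¹)) *ᵥ (y - μ)
      = ((-2 : ℝ) • ((1 + A)⁻¹ * E * (1 + A)⁻¹) * Λ) *ᵥ u := by
    rw [hu, mulVec_mulVec, hval]
  rwa [hderiv]

/-- Directional derivative of the data generating algorithm with respect to the
skew-symmetric parameter: with `u = Λ⁻¹ (I + A)(I - A)⁻¹ (y - μ)` and direction
`E = J^{i,j} - J^{j,i}`, the derivative at `t = 0` of
`t ↦ μ + (I - (A + tE))(I + A + tE)⁻¹ Λ u` equals
`-2 (I + A)⁻¹ (J^{i,j} - J^{j,i}) (I - A)⁻¹ (y - μ)`. -/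
theorem dga_deriv_skew_param {d : ℕ} (A Λ : Matrix (Fin d) (Fin d) ℝ)
    (μ y : Fin d → ℝ) (i j : Fin d) (hij : i ≠ j)
    (hA : Aᵀ = -A) (hΛdiag : Λ.IsDiag) (hΛ : IsUnit Λ)
    (E : Matrix (Fin d) (Fin d) ℝ)
    (hE : E = Matrix.single i j (1 : ℝ) - Matrix.single j i (1 : ℝ))
    (u : Fin d → ℝ)
    (hu : u = (Λ⁻¹ * ((1 + A) * (1 - A)⁻¹)).mulVec (y - μ)) :
    HasDerivAt (fun t : ℝ => μ + ((1 - (A + t • E)) * (1 + A + t • E)⁻¹ * Λ).mulVec u)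
      (((-2 : ℝ) • ((1 + A)⁻¹ * E * (1 - A)⁻¹)).mulVec (y - μ)) 0 :=
  dga_deriv_skew_param_general A Λ μ y hA hΛ E u hu
end
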